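/- If ∑_{s∈S} p(s) ≥ 3, then the fixed point equation z = Φ(q_z) has exactly one solution z ∈ (0,∞). -/

import Mathlib

/-!
Put `c s = λ s / p s`, so that `q = q_z s` solves `c s * q ^ 2 = z * (1 - q)`. Then
`p s * (1 - q) / q = λ s * q / z` and `λ s * (-log (1 - q) - q) = z * p s * logTailRatio q`, so
`z = Φ(q_z)` becomes `G z = 1` for `G z = ∑ s, p s * logTailRatio (q_z s)`.

Each `q_z s` increases continuously from `0` to `1` as `z` runs through `(0, ∞)`, and
`logTailRatio` is strictly decreasing on `(0, 1)` because `-log (1 - q) > 2 q / (2 - q)`;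
hence `G` is continuous and strictly decreasing. It tends to `logTailRatio 1 = 0` as `z → ∞`,
while for small `z` every `q_z s` is at most `1 / 2`, where `logTailRatio > 1 / 3`, so
`G > (∑ p s) / 3 ≥ 1`.
-/

open Real Set Filter Topology

lemma sq_lt_neg_log_one_sub_sub_mul {q : ℝ} (hq : q ∈ Ioo (0 : ℝ) 1) :
    q ^ 2 < (-log (1 - q) - q) * (2 - q) := by
  obtain ⟨hq0, hq1⟩ := hq
  have h2q : 0 < 2 - q := by linarith
  set y := q / (2 - q)
  have hy0 : 0 < y := div_pos hq0 h2q
  have hy1 : y < 1 := (div_lt_one h2q).2 (by linarith)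
  have hyq : y * (2 - q) = q := div_mul_cancel₀ q h2q.ne'
  have h1q : 1 - q = (1 - y) / (1 + y) := by
    rw [eq_div_iff (by linarith)]
    linear_combination hyq
  have hratio : (1 + y) / (1 - y) = (1 - q)⁻¹ := by rw [h1q, inv_div]
  -- `log ((1 + y) / (1 - y)) ≥ 2 y + 2 y ^ 3 / 3` is the atanh series truncated after two terms
  have h := sum_range_le_log_div hy0.le hy1 2
  norm_num [Finset.sum_range_succ, hratio, log_inv] at h
  nlinarith [mul_le_mul_of_nonneg_right h h2q.le, mul_pos (pow_pos hy0 3) h2q]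

-- `-log (1 - q) - q = ∑_{k ≥ 2} q ^ k / k` is the tail of the logarithmic series.
noncomputable def logTailRatio (q : ℝ) : ℝ := (-log (1 - q) - q) * (1 - q) / q ^ 2

lemma hasDerivAt_logTailRatio {q : ℝ} (hq0 : q ≠ 0) (hq1 : q ≠ 1) :
    HasDerivAt logTailRatio ((q ^ 2 - (-log (1 - q) - q) * (2 - q)) / q ^ 3) q := by
  have h1q : 1 - q ≠ 0 := sub_ne_zero.2 (Ne.symm hq1)
  have hsub : HasDerivAt (fun x => 1 - x) (-1) q := by
    simpa using (hasDerivAt_id' q).const_sub 1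
  have htail : HasDerivAt (fun x => -log (1 - x) - x) (1 / (1 - q) - 1) q :=
    (hsub.log h1q).fun_neg.fun_sub (hasDerivAt_id' q) |>.congr_deriv (by ring)
  refine (htail.fun_mul hsub).fun_div (hasDerivAt_pow 2 q) (pow_ne_zero 2 hq0) |>.congr_deriv ?_
  field_simp
  ring

lemma strictAntiOn_logTailRatio : StrictAntiOn logTailRatio (Ioo 0 1) := by
  refine strictAntiOn_of_deriv_neg (convex_Ioo 0 1) (fun q hq => ?_) fun q hq => ?_
  · exact (hasDerivAt_logTailRatio hq.1.ne' hq.2.ne).continuousAt.continuousWithinAt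
  · rw [interior_Ioo] at hq
    rw [(hasDerivAt_logTailRatio hq.1.ne' hq.2.ne).deriv]
    exact div_neg_of_neg_of_pos (sub_neg.2 (sq_lt_neg_log_one_sub_sub_mul hq)) (pow_pos hq.1 3)

lemma one_third_lt_logTailRatio {q : ℝ} (hq : q ∈ Ioo (0 : ℝ) 1) (hq_half : q ≤ 1 / 2) :
    1 / 3 < logTailRatio q := by
  have h := sq_lt_neg_log_one_sub_sub_mul hq
  have hu : 0 < -log (1 - q) - q :=
    pos_of_mul_pos_left ((pow_pos hq.1 2).trans h) (by linarith [hq.2])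
  rw [logTailRatio, lt_div_iff₀ (pow_pos hq.1 2)]
  nlinarith

-- This form is continuous at `q = 1` as well, since `x * log x → 0` as `x → 0`.
lemma logTailRatio_eq_negMulLog (q : ℝ) :
    logTailRatio q = (negMulLog (1 - q) - q * (1 - q)) / q ^ 2 := by
  simp only [logTailRatio, negMulLog]; ring

lemma continuousAt_logTailRatio {q : ℝ} (hq : q ≠ 0) : ContinuousAt logTailRatio q := by
  simp_rw [funext logTailRatio_eq_negMulLog]
  exact ContinuousAt.div (by fun_prop) (by fun_prop) (pow_ne_zero 2 hq)

lemma tendsto_logTailRatio_one : Tendsto logTailRatio (𝓝 1) (𝓝 0) := by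
  simpa [logTailRatio] using (continuousAt_logTailRatio one_ne_zero).tendsto

lemma strictMonoOn_mul_sq_div_one_sub {c : ℝ} (hc : 0 < c) :
    StrictMonoOn (fun x => c * x ^ 2 / (1 - x)) (Ioo 0 1) := by
  rintro x ⟨hx0, hx1⟩ y ⟨hy0, hy1⟩ hxy
  have : 0 < 1 - y := by linarith
  dsimp only
  gcongr

def IsRootFamily (c : ℝ) (q : ℝ → ℝ) : Prop :=
  ∀ z > (0 : ℝ), q z ∈ Ioo 0 1 ∧ c * q z ^ 2 / (1 - q z) = z

namespace IsRootFamily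

variable {c : ℝ} {q : ℝ → ℝ}

lemma pos (hq : IsRootFamily c q) : 0 < c := by
  obtain ⟨⟨hq0, hq1⟩, he⟩ := hq 1 one_pos
  have : 0 < c * q 1 ^ 2 := (div_pos_iff_of_pos_right (sub_pos.2 hq1)).1 (by rw [he]; exact one_pos)
  exact pos_of_mul_pos_left this (sq_nonneg _)

lemma strictMonoOn (hq : IsRootFamily c q) : StrictMonoOn q (Ioi 0) := by
  intro z₁ hz₁ z₂ hz₂ hz
  obtain ⟨hq₁, he₁⟩ := hq z₁ hz₁
  obtain ⟨hq₂, he₂⟩ := hq z₂ hz₂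
  exact ((strictMonoOn_mul_sq_div_one_sub hq.pos).lt_iff_lt hq₁ hq₂).1
    (by simpa only [he₁, he₂])

lemma lt_half (hq : IsRootFamily c q) {z : ℝ} (hz : 0 < z) (hzc : z < c / 2) : q z < 1 / 2 := by
  obtain ⟨hqz, he⟩ := hq z hz
  have hhalf : (1 / 2 : ℝ) ∈ Ioo 0 1 := ⟨by norm_num, by norm_num⟩
  refine ((strictMonoOn_mul_sq_div_one_sub hq.pos).lt_iff_lt hqz hhalf).1 ?_
  rwa [he, show c * (1 / 2) ^ 2 / (1 - 1 / 2) = c / 2 by ring]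

lemma eqOn (hq : IsRootFamily c q) :
    EqOn q (fun z => (√(z ^ 2 + 4 * c * z) - z) / (2 * c)) (Ioi 0) := by
  intro z hz
  obtain ⟨⟨hq0, hq1⟩, he⟩ := hq z hz
  have hc := hq.pos
  rw [div_eq_iff (by linarith)] at he
  have hsq : z ^ 2 + 4 * c * z = (2 * c * q z + z) ^ 2 := by linear_combination (-4 * c) * he
  dsimp only
  rw [hsq, sqrt_sq (add_pos (by positivity) hz).le]
  field_simp
  ring

lemma continuousOn (hq : IsRootFamily c q) : ContinuousOn q (Ioi 0) :=
  ContinuousOn.congr (by fun_prop) hq.eqOn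

lemma tendsto_atTop (hq : IsRootFamily c q) : Tendsto q atTop (𝓝 1) := by
  have hlower : Tendsto (fun z => 1 - c / z) atTop (𝓝 1) := by
    have : Tendsto (fun z : ℝ => c / z) atTop (𝓝 0) := tendsto_const_nhds.div_atTop tendsto_id
    simpa using this.const_sub 1
  refine tendsto_of_tendsto_of_tendsto_of_le_of_le' hlower tendsto_const_nhds ?_ ?_
  all_goals filter_upwards [eventually_gt_atTop 0] with z hz
  · obtain ⟨⟨hq0, hq1⟩, he⟩ := hq z hz
    rw [div_eq_iff (by linarith)] at he
    rw [sub_le_comm, le_div_iff₀ hz]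
    nlinarith [pow_lt_one₀ hq0.le hq1 two_ne_zero, hq.pos]
  · exact (hq z hz).1.2.le

end IsRootFamily

lemma IsPreconnected.existsUnique_eq_of_injOn {X : Type*} [TopologicalSpace X] {s : Set X}
    {f : X → ℝ} {y : ℝ} {a b : X} (hs : IsPreconnected s) (hf : ContinuousOn f s)
    (hinj : InjOn f s) (ha : a ∈ s) (hb : b ∈ s) (hfa : f a < y) (hfb : y < f b) :
    ∃! x, x ∈ s ∧ f x = y := by
  obtain ⟨x, hx, hfx⟩ := hs.intermediate_value ha hb hf ⟨hfa.le, hfb.le⟩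
  exact ⟨x, ⟨hx, hfx⟩, fun x' ⟨hx', hfx'⟩ => hinj hx' hx (hfx'.trans hfx.symm)⟩

lemma eq_div_iff_sum_mul_logTailRatio_eq_one {S : Type*} [Fintype S] {lam p q : S → ℝ} {z : ℝ}
    (hz : 0 < z) (hlam : ∀ t, 0 ≤ lam t) (hp : ∀ t, p t ≠ 0)
    (hq : ∀ t, q t ∈ Ioo 0 1 ∧ lam t / p t * q t ^ 2 / (1 - q t) = z) :
    z = (-∑ t, lam t * log (1 - q t)) / (1 + ∑ t, p t * (1 - q t) / q t) ↔
      ∑ t, p t * logTailRatio (q t) = 1 := by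
  have hrel : ∀ t, lam t * q t ^ 2 = p t * z * (1 - q t) := fun t => by
    obtain ⟨⟨-, hq1⟩, he⟩ := hq t
    field_simp [hp t, (sub_pos.2 hq1).ne'] at he
    linear_combination he
  have hA : 0 ≤ ∑ t, lam t * q t :=
    Finset.sum_nonneg fun t _ => mul_nonneg (hlam t) (hq t).1.1.le
  have hU : 1 + ∑ t, p t * (1 - q t) / q t = (z + ∑ t, lam t * q t) / z := by
    have : ∀ t, p t * (1 - q t) / q t = lam t * q t / z := fun t => by
      rw [div_eq_div_iff (hq t).1.1.ne' hz.ne']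
      linear_combination -hrel t
    rw [Finset.sum_congr rfl fun t _ => this t, ← Finset.sum_div]
    field_simp
  have hV : z * ∑ t, p t * logTailRatio (q t) =
      (-∑ t, lam t * log (1 - q t)) - ∑ t, lam t * q t := by
    rw [Finset.mul_sum, ← Finset.sum_neg_distrib, ← Finset.sum_sub_distrib]
    refine Finset.sum_congr rfl fun t _ => ?_
    have := (hq t).1.1.ne'
    rw [logTailRatio]
    field_simp
    linear_combination (log (1 - q t) + q t) * hrel t
  rw [hU, eq_div_iff (by positivity), mul_div_cancel₀ _ hz.ne']
  constructor
  · intro h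
    exact mul_left_cancel₀ hz.ne' (by linarith)
  · intro h
    rw [h, mul_one] at hV
    linarith

section Family

variable {S : Type*} [Fintype S] {w c : S → ℝ} {q : ℝ → S → ℝ}

lemma strictAntiOn_sum_mul_logTailRatio [Nonempty S] (hw : ∀ s, 0 < w s)
    (hq : ∀ s, IsRootFamily (c s) (q · s)) :
    StrictAntiOn (fun z => ∑ s, w s * logTailRatio (q z s)) (Ioi 0) := by
  intro z₁ hz₁ z₂ hz₂ hz
  refine Finset.sum_lt_sum_of_nonempty Finset.univ_nonempty fun s _ => ?_
  have hlt := (hq s).strictMonoOn hz₁ hz₂ hz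
  exact mul_lt_mul_of_pos_left
    (strictAntiOn_logTailRatio (hq s z₁ hz₁).1 (hq s z₂ hz₂).1 hlt) (hw s)

lemma continuousOn_sum_mul_logTailRatio (hq : ∀ s, IsRootFamily (c s) (q · s)) :
    ContinuousOn (fun z => ∑ s, w s * logTailRatio (q z s)) (Ioi 0) := by
  refine continuousOn_finsetSum _ fun s _ => continuousOn_const.mul fun z hz => ?_
  exact (continuousAt_logTailRatio (hq s z hz).1.1.ne').comp_continuousWithinAt (f := (q · s))
    ((hq s).continuousOn z hz)

lemma exists_one_lt_sum_mul_logTailRatio [Nonempty S] (hw : ∀ s, 0 < w s)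
    (hw₃ : 3 ≤ ∑ s, w s) (hq : ∀ s, IsRootFamily (c s) (q · s)) :
    ∃ z > 0, 1 < ∑ s, w s * logTailRatio (q z s) := by
  have hsmall : ∀ᶠ z in 𝓝[>] 0, 0 < z ∧ ∀ s, z < c s / 2 :=
    eventually_mem_nhdsWithin.and <| eventually_all.2 fun s =>
      eventually_nhdsWithin_of_eventually_nhds (eventually_lt_nhds (half_pos (hq s).pos))
  obtain ⟨z, hz, hzc⟩ := hsmall.exists
  refine ⟨z, hz, ?_⟩
  calc 1 ≤ ∑ s, w s * (1 / 3) := by rw [← Finset.sum_mul]; linarith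
    _ < _ := Finset.sum_lt_sum_of_nonempty Finset.univ_nonempty fun s _ =>
      mul_lt_mul_of_pos_left (one_third_lt_logTailRatio (hq s z hz).1
        ((hq s).lt_half hz (hzc s)).le) (hw s)

lemma tendsto_sum_mul_logTailRatio_atTop (hq : ∀ s, IsRootFamily (c s) (q · s)) :
    Tendsto (fun z => ∑ s, w s * logTailRatio (q z s)) atTop (𝓝 0) := by
  simpa using tendsto_finsetSum Finset.univ fun s _ =>
    (tendsto_logTailRatio_one.comp (hq s).tendsto_atTop).const_mul (w s)

end Family

theorem fixed_point_unique_general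
    {S : Type*} [Fintype S]
    (lam : S → ℝ) (p : S → ℕ)
    (hlam : ∀ s, lam s ∈ Set.Ioo (0:ℝ) 1) (hp : ∀ s, 1 ≤ p s)
    (hP : 3 ≤ ∑ s, p s)
    (qz : ℝ → S → ℝ)
    (hqz : ∀ z > (0:ℝ), ∀ s, qz z s ∈ Set.Ioo (0:ℝ) 1 ∧
      lam s / (p s : ℝ) * (qz z s) ^ 2 / (1 - qz z s) = z) :
    ∃! z : ℝ, 0 < z ∧
      z = (-∑ t, lam t * Real.log (1 - qz z t)) /
        (1 + ∑ t, (p t : ℝ) * (1 - qz z t) / qz z t) := by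
  obtain ⟨s₀, -⟩ := Finset.nonempty_of_sum_ne_zero (by omega : ∑ s, p s ≠ 0)
  have : Nonempty S := ⟨s₀⟩
  have hp₀ : ∀ s, (0 : ℝ) < p s := fun s => by exact_mod_cast hp s
  have hP₃ : (3 : ℝ) ≤ ∑ s, (p s : ℝ) := by exact_mod_cast hP
  have hq : ∀ s, IsRootFamily (lam s / p s) (qz · s) := fun s z hz => hqz z hz s
  set G := fun z => ∑ s, (p s : ℝ) * logTailRatio (qz z s)
  obtain ⟨a, ha, hGa⟩ : ∃ a > 0, 1 < G a := exists_one_lt_sum_mul_logTailRatio hp₀ hP₃ hq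
  obtain ⟨b, hGb, hb⟩ : ∃ b, G b < 1 ∧ 0 < b :=
    ((tendsto_sum_mul_logTailRatio_atTop hq).eventually (gt_mem_nhds one_pos)).and
      (eventually_gt_atTop 0) |>.exists
  have hG : ∃! z, z ∈ Ioi 0 ∧ G z = 1 :=
    isPreconnected_Ioi.existsUnique_eq_of_injOn (continuousOn_sum_mul_logTailRatio hq)
      (strictAntiOn_sum_mul_logTailRatio hp₀ hq).injOn hb ha hGb hGa
  refine (existsUnique_congr fun z => and_congr_right fun hz => ?_).1 hG
  exact (eq_div_iff_sum_mul_logTailRatio_eq_one hz (fun t => (hlam t).1.le)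
    (fun t => (hp₀ t).ne') fun t => hqz z hz t).symm

/-- If ∑ p(s) ≥ 3, then the fixed point equation z = Φ(q_z) has exactly one solution
z ∈ (0,∞), where q_z(s) is the unique x ∈ (0,1) with (λ(s)/p(s))·x²/(1−x) = z, and
Φ(q) = (−∑ λ(t)·log(1−q(t))) / (1 + ∑ p(t)·(1−q(t))/q(t)). -/
theorem fixed_point_unique
    {S : Type*} [Fintype S] [Nonempty S]
    (lam : S → ℝ) (p : S → ℕ)
    (hlam : ∀ s, lam s ∈ Set.Ioo (0:ℝ) 1) (hp : ∀ s, 1 ≤ p s)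
    (hP : 3 ≤ ∑ s, p s)
    (qz : ℝ → S → ℝ)
    (hqz : ∀ z > (0:ℝ), ∀ s, qz z s ∈ Set.Ioo (0:ℝ) 1 ∧
      lam s / (p s : ℝ) * (qz z s) ^ 2 / (1 - qz z s) = z) :
    ∃! z : ℝ, 0 < z ∧
      z = (-∑ t, lam t * Real.log (1 - qz z t)) /
        (1 + ∑ t, (p t : ℝ) * (1 - qz z t) / qz z t) :=
  fixed_point_unique_general lam p hlam hp hP qz hqz
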